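/- arXiv:1105.5954 — 2 statements merged into one kernel-verified Lean document; each statement's English description precedes it below -/
import Mathlib

section
/- For any fixed ρ > 0 and penalty term Π, the penalised obstacle equation max_{u∈U}{A_u z − b_u} − ρ·Π(b̃ − Ãz) = 0 has at most one solution z ∈ ℝ^N: if z_1 and z_2 both solve it, then z_1 = z_2. -/
open Matrix Filter

/-- The set `K^o_N`: Z-matrices (non-positive off-diagonal entries) which are
strictly diagonally dominant. -/
def KoMat {N : ℕ} (A : Matrix (Fin N) (Fin N) ℝ) : Prop :=
  (∀ r s, r ≠ s → A r s ≤ 0) ∧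
  ∀ r, ∑ s ∈ Finset.univ.erase r, |A r s| < A r r

/-- A penalty term `Π(y) = (π₁(y₁),…,π_N(y_N))`: each `π i` is continuous,
non-decreasing, identically zero on `(-∞,0]` and strictly positive on `(0,∞)`. -/
structure PenaltyTerm (N : ℕ) where
  π : Fin N → ℝ → ℝ
  cont : ∀ i, Continuous (π i)
  mono : ∀ i, Monotone (π i)
  eq_zero : ∀ i y, y ≤ 0 → π i y = 0
  pos : ∀ i y, 0 < y → 0 < π i y

/-- The penalised obstacle equation
`max_{u∈U}{A_u z - b_u} - ρ · Π(b̃ - Ã z) = 0` (componentwise); the maximum over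
the compact set `U` is expressed via `sSup` of the image. -/
def PenObstEq {N : ℕ} (𝔄 : ℝ → Matrix (Fin N) (Fin N) ℝ) (𝔅 : ℝ → (Fin N → ℝ))
    (U : Set ℝ) (At : Matrix (Fin N) (Fin N) ℝ) (bt : Fin N → ℝ)
    (P : PenaltyTerm N) (ρ : ℝ) (z : Fin N → ℝ) : Prop :=
  ∀ i : Fin N,
    sSup ((fun u => (𝔄 u *ᵥ z - 𝔅 u) i) '' U) -
      ρ * P.π i ((bt - At *ᵥ z) i) = 0

/-!
If `z₁ ≰ z₂`, pick an index `i` where `z₁ - z₂` attains its (positive) maximum. Non-positive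
off-diagonal entries and strict diagonal dominance make `(A (z₁ - z₂))_i > 0` for every
`A ∈ K^o_N`. Hence `(A_u z - b_u)_i` is strictly larger at `z₁` than at `z₂` for every `u`, and
because the maximum over the compact `U` is attained the strict inequality survives taking the
maximum; meanwhile the penalty `ρ π_i((b̃ - Ãz)_i)` is no larger at `z₁` than at `z₂`. So the
equation cannot hold at both points. Exchanging the roles gives `z₂ ≤ z₁`.
-/

lemma KoMat.mulVec_apply_pos {N : ℕ} {A : Matrix (Fin N) (Fin N) ℝ} (hA : KoMat A)
    {w : Fin N → ℝ} {i : Fin N} (hmax : ∀ s, w s ≤ w i) (hpos : 0 < w i) :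
    0 < (A *ᵥ w) i := by
  have hoff : ∀ s ∈ Finset.univ.erase i, -|A i s| * w i ≤ A i s * w s := by
    intro s hs
    have hneg : A i s ≤ 0 := hA.1 i s (Finset.ne_of_mem_erase hs).symm
    rw [abs_of_nonpos hneg, neg_neg]
    exact mul_le_mul_of_nonpos_left (hmax s) hneg
  have hsplit : (A *ᵥ w) i = A i i * w i + ∑ s ∈ Finset.univ.erase i, A i s * w s := by
    rw [mulVec, dotProduct, ← Finset.add_sum_erase _ _ (Finset.mem_univ i)]
  calc 0 < (A i i - ∑ s ∈ Finset.univ.erase i, |A i s|) * w i :=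
        mul_pos (sub_pos.2 (hA.2 i)) hpos
    _ = A i i * w i + ∑ s ∈ Finset.univ.erase i, -|A i s| * w i := by
        rw [← Finset.sum_mul, Finset.sum_neg_distrib]; ring
    _ ≤ (A *ᵥ w) i := hsplit ▸ add_le_add_right (Finset.sum_le_sum hoff) _

lemma IsCompact.sSup_image_lt_sSup_image {α β : Type*} [ConditionallyCompleteLinearOrder α]
    [TopologicalSpace α] [ClosedIciTopology α] [TopologicalSpace β] {K : Set β} {f g : β → α}
    (hK : IsCompact K) (hne : K.Nonempty) (hf : ContinuousOn f K) (hg : BddAbove (g '' K))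
    (hfg : ∀ x ∈ K, f x < g x) :
    sSup (f '' K) < sSup (g '' K) :=
  (hK.sSup_lt_iff_of_continuous hne hf _).2 fun x hx =>
    (hfg x hx).trans_le (le_csSup hg (Set.mem_image_of_mem g hx))

lemma PenObstEq.le_of_penObstEq {N : ℕ} {a b : ℝ} (hab : a ≤ b)
    {𝔄 : ℝ → Matrix (Fin N) (Fin N) ℝ} {𝔅 : ℝ → (Fin N → ℝ)}
    (hAcont : ContinuousOn 𝔄 (Set.Icc a b)) (hbcont : ContinuousOn 𝔅 (Set.Icc a b))
    (hKo : ∀ u ∈ Set.Icc a b, KoMat (𝔄 u))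
    {At : Matrix (Fin N) (Fin N) ℝ} {bt : Fin N → ℝ} (hAt : KoMat At)
    {ρ : ℝ} (hρ : 0 < ρ) {P : PenaltyTerm N} {z₁ z₂ : Fin N → ℝ}
    (h₁ : PenObstEq 𝔄 𝔅 (Set.Icc a b) At bt P ρ z₁)
    (h₂ : PenObstEq 𝔄 𝔅 (Set.Icc a b) At bt P ρ z₂) :
    z₁ ≤ z₂ := by
  by_contra hnle
  obtain ⟨j, hj⟩ : ∃ j, z₂ j < z₁ j := by simpa [Pi.le_def] using hnle
  obtain ⟨i, -, hi⟩ := Finset.univ.exists_max_image (z₁ - z₂) ⟨j, Finset.mem_univ j⟩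
  have hmax : ∀ s, (z₁ - z₂) s ≤ (z₁ - z₂) i := fun s => hi s (Finset.mem_univ s)
  have hpos : 0 < (z₁ - z₂) i := (sub_pos.2 hj).trans_le (hmax j)
  have hentry : ∀ u ∈ Set.Icc a b, (𝔄 u *ᵥ z₂ - 𝔅 u) i < (𝔄 u *ᵥ z₁ - 𝔅 u) i := by
    intro u hu
    have hgain := (hKo u hu).mulVec_apply_pos hmax hpos
    rw [mulVec_sub, Pi.sub_apply] at hgain
    simp only [Pi.sub_apply]
    linarith
  have hsup : sSup ((fun u => (𝔄 u *ᵥ z₂ - 𝔅 u) i) '' Set.Icc a b) <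
      sSup ((fun u => (𝔄 u *ᵥ z₁ - 𝔅 u) i) '' Set.Icc a b) :=
    isCompact_Icc.sSup_image_lt_sSup_image (Set.nonempty_Icc.2 hab) (by fun_prop)
      (isCompact_Icc.image_of_continuousOn (by fun_prop)).bddAbove hentry
  have hpen : P.π i ((bt - At *ᵥ z₁) i) ≤ P.π i ((bt - At *ᵥ z₂) i) := by
    have hgain := hAt.mulVec_apply_pos hmax hpos
    rw [mulVec_sub, Pi.sub_apply] at hgain
    exact P.mono i (by simp only [Pi.sub_apply]; linarith)
  linarith [h₁ i, h₂ i, mul_le_mul_of_nonneg_left hpen hρ.le]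

theorem penalised_obstacle_unique_general
    (N : ℕ) (a b : ℝ) (hab : a ≤ b)
    (𝔄 : ℝ → Matrix (Fin N) (Fin N) ℝ) (𝔅 : ℝ → (Fin N → ℝ))
    (hAcont : ContinuousOn 𝔄 (Set.Icc a b)) (hbcont : ContinuousOn 𝔅 (Set.Icc a b))
    (hKo : ∀ u ∈ Set.Icc a b, KoMat (𝔄 u))
    (At : Matrix (Fin N) (Fin N) ℝ) (bt : Fin N → ℝ) (hAt : KoMat At)
    (ρ : ℝ) (hρ : 0 < ρ) (P : PenaltyTerm N) (z₁ z₂ : Fin N → ℝ)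
    (h₁ : PenObstEq 𝔄 𝔅 (Set.Icc a b) At bt P ρ z₁)
    (h₂ : PenObstEq 𝔄 𝔅 (Set.Icc a b) At bt P ρ z₂) :
    z₁ = z₂ :=
  le_antisymm (h₁.le_of_penObstEq hab hAcont hbcont hKo hAt hρ h₂)
    (h₂.le_of_penObstEq hab hAcont hbcont hKo hAt hρ h₁)

/-- The penalised obstacle equation has at most one solution. -/
theorem penalised_obstacle_unique
    (N : ℕ) (hN : 0 < N) (a b : ℝ) (hab : a ≤ b)
    (𝔄 : ℝ → Matrix (Fin N) (Fin N) ℝ) (𝔅 : ℝ → (Fin N → ℝ))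
    (hAcont : ContinuousOn 𝔄 (Set.Icc a b)) (hbcont : ContinuousOn 𝔅 (Set.Icc a b))
    (hKo : ∀ u ∈ Set.Icc a b, KoMat (𝔄 u))
    (At : Matrix (Fin N) (Fin N) ℝ) (bt : Fin N → ℝ) (hAt : KoMat At)
    (ρ : ℝ) (hρ : 0 < ρ) (P : PenaltyTerm N) (z₁ z₂ : Fin N → ℝ)
    (h₁ : PenObstEq 𝔄 𝔅 (Set.Icc a b) At bt P ρ z₁)
    (h₂ : PenObstEq 𝔄 𝔅 (Set.Icc a b) At bt P ρ z₂) :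
    z₁ = z₂ :=
  penalised_obstacle_unique_general N a b hab 𝔄 𝔅 hAcont hbcont hKo At bt hAt ρ hρ P z₁ z₂ h₁ h₂
end

section
/- There exists a constant C > 0, independent of ρ and of the penalty term Π, such that for every ρ > 0, every penalty term Π, and every solution z_ρ of the penalised obstacle equation, one has ‖z_ρ‖∞ ≤ C. -/
open Matrix Filter

/-
A solution is controlled at an index `i` where `|z i|` is maximal, using strict diagonal
dominance with a gap `δ > 0` uniform over the compact family `{A_u} ∪ {Ã}`.
If `z i ≥ 0`, either the penalty at `i` is active, so `(Ã z)_i < b̃_i`, or it vanishes, so the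
maximum over `u` is `0` and `(A_u z)_i ≤ (b_u)_i` for every `u`; in both cases the row estimate
`δ z_i ≤ (A z)_i` bounds `z i` from above. If `z i < 0`, the maximum over `u` equals the
non-negative penalty, so some `u` has `(A_u z)_i ≥ (b_u)_i`, and the row estimate bounds `z i`
from below.
-/

section DiagGap

variable {ι R : Type*} [Fintype ι] [DecidableEq ι]

def diagGap [CommRing R] [LinearOrder R] (A : Matrix ι ι R) (i : ι) : R :=
  A i i - ∑ s ∈ Finset.univ.erase i, |A i s|

variable [CommRing R] [LinearOrder R] [IsStrictOrderedRing R]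

theorem diagGap_mul_le_mulVec (A : Matrix ι ι R) {z : ι → R} {i : ι}
    (hz : ∀ s, |z s| ≤ z i) : diagGap A i * z i ≤ (A *ᵥ z) i := by
  have hoff : |∑ s ∈ Finset.univ.erase i, A i s * z s| ≤
      ∑ s ∈ Finset.univ.erase i, |A i s| * z i :=
    (Finset.abs_sum_le_sum_abs _ _).trans <| Finset.sum_le_sum fun s _ => by
      rw [abs_mul]; exact mul_le_mul_of_nonneg_left (hz s) (abs_nonneg _)
  calc diagGap A i * z i = A i i * z i - ∑ s ∈ Finset.univ.erase i, |A i s| * z i := by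
        rw [diagGap, sub_mul, Finset.sum_mul]
    _ ≤ A i i * z i + ∑ s ∈ Finset.univ.erase i, A i s * z s := by
        linarith [neg_abs_le (∑ s ∈ Finset.univ.erase i, A i s * z s)]
    _ = (A *ᵥ z) i := by
        rw [mulVec, dotProduct, ← Finset.add_sum_erase _ _ (Finset.mem_univ i)]

theorem mulVec_le_diagGap_mul (A : Matrix ι ι R) {z : ι → R} {i : ι}
    (hz : ∀ s, |z s| ≤ -z i) : (A *ᵥ z) i ≤ diagGap A i * z i := by
  simpa [mulVec_neg] using diagGap_mul_le_mulVec A (z := -z) (i := i) (by simpa using hz)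

end DiagGap

theorem continuous_diagGap {ι : Type*} [Fintype ι] [DecidableEq ι] (i : ι) :
    Continuous fun A : Matrix ι ι ℝ => diagGap A i := by
  unfold diagGap
  fun_prop

theorem KoMat.diagGap_pos {N : ℕ} {A : Matrix (Fin N) (Fin N) ℝ} (hA : KoMat A) (i : Fin N) :
    0 < diagGap A i :=
  sub_pos.2 (hA.2 i)

theorem IsCompact.exists_pos_le_diagGap {ι : Type*} [Fintype ι] [DecidableEq ι]
    {S : Set (Matrix ι ι ℝ)} (hS : IsCompact S) (hpos : ∀ A ∈ S, ∀ i, 0 < diagGap A i) :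
    ∃ δ > 0, ∀ A ∈ S, ∀ i, δ ≤ diagGap A i := by
  let _ : TopologicalSpace ι := ⊥
  have : DiscreteTopology ι := ⟨rfl⟩
  have hcont : Continuous fun p : Matrix ι ι ℝ × ι => diagGap p.1 p.2 :=
    continuous_prod_of_discrete_right.2 continuous_diagGap
  obtain ⟨δ, hδ, hle⟩ := (hS.prod isCompact_univ).exists_forall_le' hcont.continuousOn
    fun p hp => hpos p.1 hp.1 p.2
  exact ⟨δ, hδ, fun A hA i => hle (A, i) ⟨hA, Set.mem_univ i⟩⟩

theorem PenaltyTerm.nonneg {N : ℕ} (P : PenaltyTerm N) (i : Fin N) (y : ℝ) : 0 ≤ P.π i y := by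
  rcases le_or_gt y 0 with hy | hy
  · exact (P.eq_zero i y hy).ge
  · exact (P.pos i y hy).le

namespace PenObstEq

variable {N : ℕ} {𝔄 : ℝ → Matrix (Fin N) (Fin N) ℝ} {𝔅 : ℝ → (Fin N → ℝ)} {U : Set ℝ}
  {At : Matrix (Fin N) (Fin N) ℝ} {bt : Fin N → ℝ} {P : PenaltyTerm N} {ρ : ℝ} {z : Fin N → ℝ}

theorem continuousOn_residual (hA : ContinuousOn 𝔄 U) (hB : ContinuousOn 𝔅 U) (i : Fin N) :
    ContinuousOn (fun u => (𝔄 u *ᵥ z - 𝔅 u) i) U := by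
  have : Continuous fun p : Matrix (Fin N) (Fin N) ℝ × (Fin N → ℝ) => (p.1 *ᵥ z - p.2) i := by
    fun_prop
  exact this.comp_continuousOn (hA.prodMk hB)

theorem mulVec_apply_le_of_obstacle_le (h : PenObstEq 𝔄 𝔅 U At bt P ρ z) (hU : IsCompact U)
    (hA : ContinuousOn 𝔄 U) (hB : ContinuousOn 𝔅 U) {i : Fin N} (hi : bt i ≤ (At *ᵥ z) i)
    {u : ℝ} (hu : u ∈ U) : (𝔄 u *ᵥ z) i ≤ 𝔅 u i := by
  have hsup : sSup ((fun u => (𝔄 u *ᵥ z - 𝔅 u) i) '' U) = 0 := by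
    simpa [P.eq_zero i _ (sub_nonpos.2 hi)] using h i
  have := le_csSup (hU.image_of_continuousOn (continuousOn_residual (z := z) hA hB i)).bddAbove
    (Set.mem_image_of_mem _ hu)
  rw [hsup] at this
  simpa [sub_nonpos] using this

theorem exists_le_mulVec_apply (h : PenObstEq 𝔄 𝔅 U At bt P ρ z) (hU : IsCompact U)
    (hne : U.Nonempty) (hA : ContinuousOn 𝔄 U) (hB : ContinuousOn 𝔅 U) (hρ : 0 ≤ ρ)
    (i : Fin N) : ∃ u ∈ U, 𝔅 u i ≤ (𝔄 u *ᵥ z) i := by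
  obtain ⟨u, hu, hmax⟩ :=
    (hU.image_of_continuousOn (continuousOn_residual (z := z) hA hB i)).sSup_mem (hne.image _)
  have hval : (𝔄 u *ᵥ z - 𝔅 u) i = ρ * P.π i ((bt - At *ᵥ z) i) :=
    hmax.trans (eq_of_sub_eq_zero (h i))
  exact ⟨u, hu, sub_nonneg.1 (show 0 ≤ (𝔄 u *ᵥ z - 𝔅 u) i from hval ▸ mul_nonneg hρ (P.nonneg _ _))⟩

theorem mul_abs_le_of_forall_abs_le (h : PenObstEq 𝔄 𝔅 U At bt P ρ z) (hU : IsCompact U)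
    (hne : U.Nonempty) (hA : ContinuousOn 𝔄 U) (hB : ContinuousOn 𝔅 U) (hρ : 0 ≤ ρ) {δ M : ℝ}
    (hδA : ∀ u ∈ U, ∀ i, δ ≤ diagGap (𝔄 u) i) (hδAt : ∀ i, δ ≤ diagGap At i)
    (hMB : ∀ u ∈ U, ‖𝔅 u‖ ≤ M) (hMbt : ‖bt‖ ≤ M) {i : Fin N} (hi : ∀ s, |z s| ≤ |z i|) :
    δ * |z i| ≤ M := by
  have hMB' : ∀ u ∈ U, |𝔅 u i| ≤ M := fun u hu => (norm_le_pi_norm _ i).trans (hMB u hu)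
  rcases le_or_gt 0 (z i) with hzi | hzi
  · have hz : ∀ s, |z s| ≤ z i := by simpa [abs_of_nonneg hzi] using hi
    rw [abs_of_nonneg hzi]
    by_cases hobst : bt i ≤ (At *ᵥ z) i
    · obtain ⟨u, hu⟩ := hne
      calc δ * z i ≤ diagGap (𝔄 u) i * z i := mul_le_mul_of_nonneg_right (hδA u hu i) hzi
        _ ≤ (𝔄 u *ᵥ z) i := diagGap_mul_le_mulVec _ hz
        _ ≤ 𝔅 u i := h.mulVec_apply_le_of_obstacle_le hU hA hB hobst hu
        _ ≤ M := (le_abs_self _).trans (hMB' u hu)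
    · calc δ * z i ≤ diagGap At i * z i := mul_le_mul_of_nonneg_right (hδAt i) hzi
        _ ≤ (At *ᵥ z) i := diagGap_mul_le_mulVec _ hz
        _ ≤ bt i := (not_le.1 hobst).le
        _ ≤ M := (le_abs_self _).trans ((norm_le_pi_norm bt i).trans hMbt)
  · have hz : ∀ s, |z s| ≤ -z i := by simpa [abs_of_neg hzi] using hi
    obtain ⟨u, hu, hle⟩ := h.exists_le_mulVec_apply hU hne hA hB hρ i
    have : -M ≤ δ * z i :=
      calc -M ≤ 𝔅 u i := neg_le_of_abs_le (hMB' u hu)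
        _ ≤ (𝔄 u *ᵥ z) i := hle
        _ ≤ diagGap (𝔄 u) i * z i := mulVec_le_diagGap_mul _ hz
        _ ≤ δ * z i := mul_le_mul_of_nonpos_right (hδA u hu i) hzi.le
    rw [abs_of_neg hzi]
    linarith

end PenObstEq

theorem penalised_obstacle_solution_bounded_general
    (N : ℕ) (a b : ℝ) (hab : a ≤ b)
    (𝔄 : ℝ → Matrix (Fin N) (Fin N) ℝ) (𝔅 : ℝ → (Fin N → ℝ))
    (hAcont : ContinuousOn 𝔄 (Set.Icc a b)) (hbcont : ContinuousOn 𝔅 (Set.Icc a b))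
    (hKo : ∀ u ∈ Set.Icc a b, KoMat (𝔄 u))
    (At : Matrix (Fin N) (Fin N) ℝ) (bt : Fin N → ℝ) (hAt : KoMat At) :
    ∃ C > (0:ℝ), ∀ ρ > (0:ℝ), ∀ P : PenaltyTerm N, ∀ z : Fin N → ℝ,
      PenObstEq 𝔄 𝔅 (Set.Icc a b) At bt P ρ z → ‖z‖ ≤ C := by
  have hU := isCompact_Icc (a := a) (b := b)
  obtain ⟨δ, hδ, hgap⟩ := ((hU.image_of_continuousOn hAcont).union (isCompact_singleton (x := At)))
    |>.exists_pos_le_diagGap (by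
      rintro A (⟨u, hu, rfl⟩ | rfl)
      exacts [(hKo u hu).diagGap_pos, hAt.diagGap_pos])
  obtain ⟨M, hM⟩ := ((hU.image_of_continuousOn hbcont).union (isCompact_singleton (x := bt)))
    |>.isBounded.exists_norm_le
  refine ⟨max 1 (M / δ), lt_max_of_lt_left one_pos, fun ρ hρ P z hz => ?_⟩
  refine (pi_norm_le_iff_of_nonneg (zero_le_one.trans (le_max_left _ _))).2 fun j => ?_
  obtain ⟨i, -, hi⟩ := Finset.exists_max_image Finset.univ (fun s => |z s|) ⟨j, Finset.mem_univ j⟩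
  have hzi : δ * |z i| ≤ M := hz.mul_abs_le_of_forall_abs_le hU (Set.nonempty_Icc.2 hab)
    hAcont hbcont hρ.le
    (fun u hu => hgap _ (.inl ⟨u, hu, rfl⟩)) (hgap At (.inr rfl))
    (fun u hu => hM _ (.inl ⟨u, hu, rfl⟩)) (hM bt (.inr rfl)) (fun s => hi s (Finset.mem_univ s))
  calc ‖z j‖ = |z j| := Real.norm_eq_abs _
    _ ≤ |z i| := hi j (Finset.mem_univ j)
    _ ≤ M / δ := (le_div_iff₀' hδ).2 hzi
    _ ≤ max 1 (M / δ) := le_max_right _ _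

/-- Solutions of the penalised obstacle equation are bounded in the maximum
norm by a constant independent of `ρ` and of the penalty term `Π`. -/
theorem penalised_obstacle_solution_bounded
    (N : ℕ) (hN : 0 < N) (a b : ℝ) (hab : a ≤ b)
    (𝔄 : ℝ → Matrix (Fin N) (Fin N) ℝ) (𝔅 : ℝ → (Fin N → ℝ))
    (hAcont : ContinuousOn 𝔄 (Set.Icc a b)) (hbcont : ContinuousOn 𝔅 (Set.Icc a b))
    (hKo : ∀ u ∈ Set.Icc a b, KoMat (𝔄 u))
    (At : Matrix (Fin N) (Fin N) ℝ) (bt : Fin N → ℝ) (hAt : KoMat At) :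
    ∃ C > (0:ℝ), ∀ ρ > (0:ℝ), ∀ P : PenaltyTerm N, ∀ z : Fin N → ℝ,
      PenObstEq 𝔄 𝔅 (Set.Icc a b) At bt P ρ z → ‖z‖ ≤ C :=
  penalised_obstacle_solution_bounded_general N a b hab 𝔄 𝔅 hAcont hbcont hKo At bt hAt
end
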